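/- arXiv:1708.00395 — 3 statements merged into one kernel-verified Lean document; each statement's English description precedes it below -/
import Mathlib

section
/- For every θ in the closed interval [π/3, 2π/3], each of the six Nienhuis weights u₁(θ), u₂(θ), v(θ), w₁(θ), w₂(θ) (and the trivial weight 1) is nonnegative. -/
open Real

noncomputable def Dw (θ : ℝ) : ℝ :=
  Real.sin (5 * π / 4 + 3 * θ / 8) * Real.sin (5 * π / 8 - 3 * θ / 8)

noncomputable def u₁ (θ : ℝ) : ℝ :=
  Real.sin (5 * π / 4) * Real.sin (5 * π / 8 + 3 * θ / 8) / Dw θ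

noncomputable def u₂ (θ : ℝ) : ℝ :=
  Real.sin (5 * π / 4) * Real.sin (3 * θ / 8) / Dw θ

noncomputable def v (θ : ℝ) : ℝ :=
  Real.sin (5 * π / 8 + 3 * θ / 8) * Real.sin (-(3 * θ / 8)) / Dw θ

noncomputable def w₁ (θ : ℝ) : ℝ :=
  Real.sin (5 * π / 8 + 3 * θ / 8) * Real.sin (5 * π / 4 - 3 * θ / 8) / Dw θ

noncomputable def w₂ (θ : ℝ) : ℝ :=
  Real.sin (15 * π / 8 + 3 * θ / 8) * Real.sin (-(3 * θ / 8)) / Dw θ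

theorem nienhuis_weights_nonneg :
    ∀ θ ∈ Set.Icc (π / 3) (2 * π / 3),
      0 ≤ u₁ θ ∧ 0 ≤ u₂ θ ∧ 0 ≤ v θ ∧ 0 ≤ w₁ θ ∧ 0 ≤ w₂ θ ∧ 0 ≤ (1 : ℝ) := by
  intro θ hθ
  obtain ⟨h1, h2⟩ := hθ
  have hpi := Real.pi_pos
  have hx1 : π / 8 ≤ 3 * θ / 8 := by linarith
  have hx2 : 3 * θ / 8 ≤ π / 4 := by linarith
  -- denominator factors
  have hA : Real.sin (5 * π / 4 + 3 * θ / 8) < 0 := by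
    have : (5 * π / 4 + 3 * θ / 8) = (π / 4 + 3 * θ / 8) + π := by ring
    rw [this, Real.sin_add_pi]
    have : 0 < Real.sin (π / 4 + 3 * θ / 8) :=
      Real.sin_pos_of_pos_of_lt_pi (by linarith) (by linarith)
    linarith
  have hB : 0 < Real.sin (5 * π / 8 - 3 * θ / 8) :=
    Real.sin_pos_of_pos_of_lt_pi (by linarith) (by linarith)
  have hD : Dw θ < 0 := mul_neg_of_neg_of_pos hA hB
  have hDle : Dw θ ≤ 0 := hD.le
  -- other sine signs
  have hC : 0 < Real.sin (5 * π / 8 + 3 * θ / 8) :=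
    Real.sin_pos_of_pos_of_lt_pi (by linarith) (by linarith)
  have h54 : Real.sin (5 * π / 4) < 0 := by
    have : (5 * π / 4) = π / 4 + π := by ring
    rw [this, Real.sin_add_pi]
    have : 0 < Real.sin (π / 4) :=
      Real.sin_pos_of_pos_of_lt_pi (by linarith) (by linarith)
    linarith
  have hsx : 0 < Real.sin (3 * θ / 8) :=
    Real.sin_pos_of_pos_of_lt_pi (by linarith) (by linarith)
  have hnegx : Real.sin (-(3 * θ / 8)) ≤ 0 := by
    rw [Real.sin_neg]; linarith
  have hF : Real.sin (5 * π / 4 - 3 * θ / 8) ≤ 0 := by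
    have : (5 * π / 4 - 3 * θ / 8) = (π / 4 - 3 * θ / 8) + π := by ring
    rw [this, Real.sin_add_pi]
    have : 0 ≤ Real.sin (π / 4 - 3 * θ / 8) :=
      Real.sin_nonneg_of_nonneg_of_le_pi (by linarith) (by linarith)
    linarith
  have hG : 0 ≤ Real.sin (15 * π / 8 + 3 * θ / 8) := by
    have : (15 * π / 8 + 3 * θ / 8) = (3 * θ / 8 - π / 8) + 2 * π := by ring
    rw [this, Real.sin_add_two_pi]
    exact Real.sin_nonneg_of_nonneg_of_le_pi (by linarith) (by linarith)
  simp only [u₁, u₂, v, w₁, w₂]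
  refine ⟨?_, ?_, ?_, ?_, ?_, zero_le_one⟩
  · exact div_nonneg_iff.mpr (Or.inr ⟨by nlinarith, hDle⟩)
  · exact div_nonneg_iff.mpr (Or.inr ⟨by nlinarith, hDle⟩)
  · exact div_nonneg_iff.mpr (Or.inr ⟨by nlinarith, hDle⟩)
  · exact div_nonneg_iff.mpr (Or.inr ⟨by nlinarith, hDle⟩)
  · exact div_nonneg_iff.mpr (Or.inr ⟨by nlinarith, hDle⟩)
end

section
/- For every θ ∈ [π/3, 2π/3] one has u₁(θ)² ≥ w₁(θ) and u₂(θ)² ≥ w₂(θ). -/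
open Real

lemma sin_sq_half (t : ℝ) : Real.sin t ^ 2 = 1/2 - Real.cos (2*t) / 2 := by
  rw [Real.sin_sq, Real.cos_sq]; ring

set_option maxHeartbeats 1000000 in
lemma nienhuis_aux (a : ℝ) (ha1 : π/8 ≤ a) (ha2 : a ≤ π/4) :
    Real.sin (5*π/4 + a) * Real.sin (5*π/8 - a) < 0 ∧
    Real.sin (5*π/8 + a) * Real.sin (5*π/4 - a) *
      (Real.sin (5*π/4 + a) * Real.sin (5*π/8 - a))
      ≤ (Real.sin (5*π/4) * Real.sin (5*π/8 + a))^2 ∧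
    Real.sin (15*π/8 + a) * Real.sin (-a) *
      (Real.sin (5*π/4 + a) * Real.sin (5*π/8 - a))
      ≤ (Real.sin (5*π/4) * Real.sin a)^2 := by
  have hπ := Real.pi_pos
  have hr0 : (0:ℝ) ≤ Real.sqrt 2 := Real.sqrt_nonneg 2
  have hr2 : Real.sqrt 2 ^ 2 = 2 := Real.sq_sqrt (by norm_num)
  set S := Real.sin (2*a) with hSdef
  set C := Real.cos (2*a) with hCdef
  have hSC : S^2 + C^2 = 1 := Real.sin_sq_add_cos_sq _
  have hS1 : S ≤ 1 := Real.sin_le_one _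
  have hC1 : C ≤ 1 := Real.cos_le_one _
  have hC0 : 0 ≤ C := Real.cos_nonneg_of_mem_Icc ⟨by linarith, by linarith⟩
  have hS : Real.sqrt 2 / 2 ≤ S := by
    have h := Real.cos_le_cos_of_nonneg_of_le_pi (x := π/2 - 2*a) (y := π/4)
      (by linarith) (by linarith) (by linarith)
    rw [Real.cos_pi_div_two_sub, Real.cos_pi_div_four] at h
    exact h
  have hS0 : 0 ≤ S := le_trans (by positivity) hS
  -- special values
  have hs54 : Real.sin (5*π/4) = -(Real.sqrt 2 / 2) := by
    rw [show 5*π/4 = π/4 + π by ring, Real.sin_add_pi, Real.sin_pi_div_four]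
  have hc54 : Real.cos (5*π/4) = -(Real.sqrt 2 / 2) := by
    rw [show 5*π/4 = π/4 + π by ring, Real.cos_add_pi, Real.cos_pi_div_four]
  have hc52 : Real.cos (5*π/2) = 0 := by
    rw [show 5*π/2 = π/2 + 2*π by ring, Real.cos_add_two_pi, Real.cos_pi_div_two]
  have h54a : Real.cos (5*π/4 + 2*a) = Real.sqrt 2 / 2 * (S - C) := by
    rw [Real.cos_add, hc54, hs54]; ring
  -- products
  have hPQ : Real.sin (5*π/8 + a) * Real.sin (5*π/8 - a) = (C + Real.sqrt 2/2) / 2 := by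
    have h := Real.cos_sub_cos (5*π/4) (2*a)
    rw [show (5*π/4 + 2*a)/2 = 5*π/8 + a by ring,
        show (5*π/4 - 2*a)/2 = 5*π/8 - a by ring, hc54] at h
    linarith
  have hRR : Real.sin (5*π/4 + a) * Real.sin (5*π/4 - a) = C / 2 := by
    have h := Real.cos_sub_cos (5*π/2) (2*a)
    rw [show (5*π/2 + 2*a)/2 = 5*π/4 + a by ring,
        show (5*π/2 - 2*a)/2 = 5*π/4 - a by ring, hc52] at h
    linarith
  have hTQ : Real.sin (15*π/8 + a) * Real.sin (5*π/8 - a)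
      = Real.sqrt 2/2 * (S - C) / 2 := by
    have h := Real.cos_sub_cos (5*π/2) (5*π/4 + 2*a)
    rw [show (5*π/2 + (5*π/4 + 2*a))/2 = 15*π/8 + a by ring,
        show (5*π/2 - (5*π/4 + 2*a))/2 = 5*π/8 - a by ring, hc52, h54a] at h
    linarith
  have haB : Real.sin (5*π/4 + a) * Real.sin a
      = (-(Real.sqrt 2/2) - Real.sqrt 2/2 * (S - C)) / 2 := by
    have h := Real.cos_sub_cos (5*π/4 + 2*a) (5*π/4)
    rw [show ((5*π/4 + 2*a) + 5*π/4)/2 = 5*π/4 + a by ring,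
        show ((5*π/4 + 2*a) - 5*π/4)/2 = a by ring, hc54, h54a] at h
    linarith
  have hP2 : Real.sin (5*π/8 + a) ^ 2 = 1/2 - Real.sqrt 2/2 * (S - C) / 2 := by
    rw [sin_sq_half, show 2*(5*π/8 + a) = 5*π/4 + 2*a by ring, h54a]
  have hsa2 : Real.sin a ^ 2 = 1/2 - C/2 := by
    rw [sin_sq_half]
  clear_value S C
  -- sign of D
  have hB_neg : Real.sin (5*π/4 + a) < 0 := by
    have hpos : 0 < Real.sin (π/4 + a) :=
      Real.sin_pos_of_pos_of_lt_pi (by linarith) (by linarith)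
    rw [show 5*π/4 + a = (π/4 + a) + π by ring, Real.sin_add_pi]
    linarith
  have hQ_pos : 0 < Real.sin (5*π/8 - a) :=
    Real.sin_pos_of_pos_of_lt_pi (by linarith) (by linarith)
  refine ⟨mul_neg_of_neg_of_pos hB_neg hQ_pos, ?_, ?_⟩
  · have hdiff : (Real.sin (5*π/4) * Real.sin (5*π/8 + a))^2
        - Real.sin (5*π/8 + a) * Real.sin (5*π/4 - a) *
          (Real.sin (5*π/4 + a) * Real.sin (5*π/8 - a))
        = (S^2 - Real.sqrt 2/2 * S) / 4 := by
      calc (Real.sin (5*π/4) * Real.sin (5*π/8 + a))^2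
            - Real.sin (5*π/8 + a) * Real.sin (5*π/4 - a) *
              (Real.sin (5*π/4 + a) * Real.sin (5*π/8 - a))
          = Real.sin (5*π/4)^2 * Real.sin (5*π/8 + a)^2
            - (Real.sin (5*π/8 + a) * Real.sin (5*π/8 - a)) *
              (Real.sin (5*π/4 + a) * Real.sin (5*π/4 - a)) := by ring
        _ = (-(Real.sqrt 2/2))^2 * (1/2 - Real.sqrt 2/2 * (S - C) / 2)
            - ((C + Real.sqrt 2/2)/2) * (C/2) := by rw [hs54, hP2, hPQ, hRR]
        _ = (S^2 - Real.sqrt 2/2 * S) / 4 := by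
            linear_combination (-(1:ℝ)/4) * hSC + (1/8 - Real.sqrt 2*S/16 + Real.sqrt 2*C/16) * hr2
    have h0 : 0 ≤ (S^2 - Real.sqrt 2/2 * S) / 4 := by
      nlinarith [mul_nonneg hS0 (sub_nonneg.2 hS)]
    linarith
  · have hdiff : (Real.sin (5*π/4) * Real.sin a)^2
        - Real.sin (15*π/8 + a) * Real.sin (-a) *
          (Real.sin (5*π/4 + a) * Real.sin (5*π/8 - a))
        = (1 - C - S + 2*S*C) / 8 := by
      calc (Real.sin (5*π/4) * Real.sin a)^2
            - Real.sin (15*π/8 + a) * Real.sin (-a) *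
              (Real.sin (5*π/4 + a) * Real.sin (5*π/8 - a))
          = Real.sin (5*π/4)^2 * Real.sin a^2
            + (Real.sin (15*π/8 + a) * Real.sin (5*π/8 - a)) *
              (Real.sin (5*π/4 + a) * Real.sin a) := by
            rw [Real.sin_neg]; ring
        _ = (-(Real.sqrt 2/2))^2 * (1/2 - C/2)
            + (Real.sqrt 2/2 * (S - C) / 2) *
              ((-(Real.sqrt 2/2) - Real.sqrt 2/2 * (S - C)) / 2) := by
            rw [hs54, hsa2, hTQ, haB]
        _ = (1 - C - S + 2*S*C) / 8 := by
            linear_combination (-(1:ℝ)/8) * hSC +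
              (1/8 - C/8 - (S-C)*(1+S-C)/16) * hr2
    have h0 : 0 ≤ (1 - C - S + 2*S*C) / 8 := by
      nlinarith [mul_nonneg (sub_nonneg.2 hS1) (sub_nonneg.2 hC1), mul_nonneg hS0 hC0]
    linarith


theorem nienhuis_sq_ge_w :
    ∀ θ ∈ Set.Icc (π / 3) (2 * π / 3),
      u₁ θ ^ 2 ≥ w₁ θ ∧ u₂ θ ^ 2 ≥ w₂ θ := by
  intro θ hθ
  obtain ⟨h1, h2⟩ := hθ
  have hπ := Real.pi_pos
  obtain ⟨hDneg, k1, k2⟩ := nienhuis_aux (3*θ/8) (by linarith) (by linarith)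
  have hDdef : Dw θ = Real.sin (5*π/4 + 3*θ/8) * Real.sin (5*π/8 - 3*θ/8) := rfl
  have hDne : Dw θ ≠ 0 := by rw [hDdef]; exact ne_of_lt hDneg
  constructor
  · have hnum : Real.sin (5*π/8 + 3*θ/8) * Real.sin (5*π/4 - 3*θ/8) * Dw θ
        ≤ (Real.sin (5*π/4) * Real.sin (5*π/8 + 3*θ/8))^2 := by rw [hDdef]; exact k1
    rw [ge_iff_le, u₁, w₁, div_pow]
    have hexp : (Real.sin (5*π/4) * Real.sin (5*π/8 + 3*θ/8))^2 / (Dw θ)^2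
        - Real.sin (5*π/8 + 3*θ/8) * Real.sin (5*π/4 - 3*θ/8) / Dw θ
        = ((Real.sin (5*π/4) * Real.sin (5*π/8 + 3*θ/8))^2
            - Real.sin (5*π/8 + 3*θ/8) * Real.sin (5*π/4 - 3*θ/8) * Dw θ) / (Dw θ)^2 := by
      field_simp
    have h0 : 0 ≤ ((Real.sin (5*π/4) * Real.sin (5*π/8 + 3*θ/8))^2
            - Real.sin (5*π/8 + 3*θ/8) * Real.sin (5*π/4 - 3*θ/8) * Dw θ) / (Dw θ)^2 :=
      div_nonneg (by linarith) (sq_nonneg _)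
    linarith
  · have hnum : Real.sin (15*π/8 + 3*θ/8) * Real.sin (-(3*θ/8)) * Dw θ
        ≤ (Real.sin (5*π/4) * Real.sin (3*θ/8))^2 := by rw [hDdef]; exact k2
    rw [ge_iff_le, u₂, w₂, div_pow]
    have hexp : (Real.sin (5*π/4) * Real.sin (3*θ/8))^2 / (Dw θ)^2
        - Real.sin (15*π/8 + 3*θ/8) * Real.sin (-(3*θ/8)) / Dw θ
        = ((Real.sin (5*π/4) * Real.sin (3*θ/8))^2
            - Real.sin (15*π/8 + 3*θ/8) * Real.sin (-(3*θ/8)) * Dw θ) / (Dw θ)^2 := by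
      field_simp
    have h0 : 0 ≤ ((Real.sin (5*π/4) * Real.sin (3*θ/8))^2
            - Real.sin (15*π/8 + 3*θ/8) * Real.sin (-(3*θ/8)) * Dw θ) / (Dw θ)^2 :=
      div_nonneg (by linarith) (sq_nonneg _)
    linarith
end

section
/- For every natural number k and every θ ∈ [π/3, 2π/3], the arc weight u₁(θ)·u₂(θ)·v(θ)^k is greater than or equal to its value at θ = π/3, i.e. u₁(θ)·u₂(θ)·v(θ)^k ≥ u₁(π/3)·u₂(π/3)·v(π/3)^k. -/
open Real

/-!
Product-to-sum formulas turn the weights into rational functions of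
`x = -2 D(θ) = cos (π/8) + cos (3θ/4 - 3π/8)`: with `c = cos (π/8) + cos (3π/8)`,
`u₁ u₂ = (x - c) / x²` and `v = (x - c) / x`. For `θ ∈ [π/3, 2π/3]`, `x` ranges over
`[2 cos (π/8), 1 + cos (π/8)]` and is smallest at `θ = π/3`. Both rational functions are
nonnegative and increasing there, the first one because `x ≤ 2c`.
-/

open Set

lemma neg_two_mul_Dw (θ : ℝ) : -2 * Dw θ = cos (π / 8) + cos (3 * θ / 4 - 3 * π / 8) := by
  have h := two_mul_sin_mul_sin (5 * π / 4 + 3 * θ / 8) (5 * π / 8 - 3 * θ / 8)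
  rw [show 5 * π / 4 + 3 * θ / 8 - (5 * π / 8 - 3 * θ / 8) = 3 * θ / 4 - 3 * π / 8 + π by ring,
    show 5 * π / 4 + 3 * θ / 8 + (5 * π / 8 - 3 * θ / 8) = 2 * π - π / 8 by ring,
    cos_add_pi, cos_two_pi_sub] at h
  rw [Dw]; linarith

lemma two_mul_sin_mul_sin_eq_neg_two_mul_Dw_sub (θ : ℝ) :
    2 * sin (5 * π / 8 + 3 * θ / 8) * sin (3 * θ / 8)
      = -2 * Dw θ - (cos (π / 8) + cos (3 * π / 8)) := by
  rw [two_mul_sin_mul_sin, neg_two_mul_Dw,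
    show 5 * π / 8 + 3 * θ / 8 - 3 * θ / 8 = π - 3 * π / 8 by ring,
    show 5 * π / 8 + 3 * θ / 8 + 3 * θ / 8 = 3 * θ / 4 - 3 * π / 8 + π by ring,
    cos_pi_sub, cos_add_pi]
  ring

lemma sin_five_pi_div_four_sq : sin (5 * π / 4) ^ 2 = 1 / 2 := by
  rw [sin_sq_eq_half_sub, show 2 * (5 * π / 4) = π / 2 + 2 * π by ring, cos_add_two_pi,
    cos_pi_div_two]
  ring

lemma u₁_mul_u₂_eq (θ : ℝ) :
    u₁ θ * u₂ θ = (-2 * Dw θ - (cos (π / 8) + cos (3 * π / 8))) / (-2 * Dw θ) ^ 2 := by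
  rw [← two_mul_sin_mul_sin_eq_neg_two_mul_Dw_sub, u₁, u₂,
    show ∀ s p q d : ℝ, s * p / d * (s * q / d) = s ^ 2 * (p * q) / d ^ 2 by intros; ring,
    sin_five_pi_div_four_sq]
  ring

lemma v_eq (θ : ℝ) :
    v θ = (-2 * Dw θ - (cos (π / 8) + cos (3 * π / 8))) / (-2 * Dw θ) := by
  rw [← two_mul_sin_mul_sin_eq_neg_two_mul_Dw_sub, v, sin_neg]
  ring

lemma monotoneOn_sub_div_sq (c : ℝ) :
    MonotoneOn (fun x : ℝ => (x - c) / x ^ 2) (Ioc 0 (2 * c)) := by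
  rintro y ⟨hy0, hyc⟩ x ⟨hx0, hxc⟩ hyx
  simp only
  rw [div_le_div_iff₀ (by positivity) (by positivity)]
  -- cross-multiplied, the claim is `(x - y) (c (x + y) - x y) ≥ 0`,
  -- and `c (x + y) - x y = x (c - y / 2) + y (c - x / 2)`
  nlinarith [mul_nonneg (sub_nonneg.2 hyx)
    (add_nonneg (mul_nonneg hx0.le (by linarith : 0 ≤ 2 * c - y))
      (mul_nonneg hy0.le (by linarith : 0 ≤ 2 * c - x)))]

lemma monotoneOn_sub_div {c : ℝ} (hc : 0 ≤ c) :
    MonotoneOn (fun x : ℝ => (x - c) / x) (Ioi 0) := by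
  rintro y (hy : 0 < y) x (hx : 0 < x) hyx
  simp only
  rw [sub_div, sub_div, div_self hy.ne', div_self hx.ne']
  gcongr

lemma cos_three_pi_div_eight_le_cos_pi_div_eight : cos (3 * π / 8) ≤ cos (π / 8) :=
  cos_le_cos_of_nonneg_of_le_pi (by positivity) (by linarith [pi_pos]) (by linarith [pi_pos])

lemma one_le_cos_pi_div_eight_add_two_mul_cos_three_pi_div_eight :
    1 ≤ cos (π / 8) + 2 * cos (3 * π / 8) := by
  have ha : 1 / 2 ≤ cos (π / 8) := by
    rw [← cos_pi_div_three]
    exact cos_le_cos_of_nonneg_of_le_pi (by positivity) (by linarith [pi_pos])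
      (by linarith [pi_pos])
  have hb : 1 / 4 ≤ cos (3 * π / 8) := by
    have h := mul_le_sin (x := π / 8) (by positivity) (by linarith [pi_pos])
    rwa [← cos_pi_div_two_sub, show π / 2 - π / 8 = 3 * π / 8 by ring,
      show 2 / π * (π / 8) = 1 / 4 by field_simp; ring] at h
  linarith

lemma neg_two_mul_Dw_mem_Icc {θ : ℝ} (hθ : θ ∈ Icc (π / 3) (2 * π / 3)) :
    -2 * Dw θ ∈ Icc (2 * cos (π / 8)) (1 + cos (π / 8)) := by
  obtain ⟨h₁, h₂⟩ := hθ
  have hφ : |3 * θ / 4 - 3 * π / 8| ≤ π / 8 := abs_le.2 ⟨by linarith, by linarith⟩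
  have hcos : cos (π / 8) ≤ cos (3 * θ / 4 - 3 * π / 8) := by
    rw [← cos_abs (3 * θ / 4 - 3 * π / 8)]
    exact cos_le_cos_of_nonneg_of_le_pi (abs_nonneg _) (by linarith [pi_pos]) hφ
  rw [neg_two_mul_Dw]
  exact ⟨by linarith, by linarith [cos_le_one (3 * θ / 4 - 3 * π / 8)]⟩

lemma neg_two_mul_Dw_pi_div_three : -2 * Dw (π / 3) = 2 * cos (π / 8) := by
  rw [neg_two_mul_Dw, show 3 * (π / 3) / 4 - 3 * π / 8 = -(π / 8) by ring, cos_neg]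
  ring

theorem arc_weight_minimized_at_pi_div_three :
    ∀ (k : ℕ), ∀ θ ∈ Set.Icc (π / 3) (2 * π / 3),
      u₁ θ * u₂ θ * v θ ^ k ≥ u₁ (π / 3) * u₂ (π / 3) * v (π / 3) ^ k := by
  intro k θ hθ
  rw [u₁_mul_u₂_eq, u₁_mul_u₂_eq, v_eq, v_eq, neg_two_mul_Dw_pi_div_three]
  obtain ⟨hlo, hhi⟩ := neg_two_mul_Dw_mem_Icc hθ
  set a := cos (π / 8)
  set c := a + cos (3 * π / 8)
  have ha : 0 < a := cos_pos_of_mem_Ioo ⟨by linarith [pi_pos], by linarith [pi_pos]⟩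
  have hca : c ≤ 2 * a := by linarith [cos_three_pi_div_eight_le_cos_pi_div_eight]
  have hc : 1 + a ≤ 2 * c := by
    linarith [one_le_cos_pi_div_eight_add_two_mul_cos_three_pi_div_eight]
  have h₀ : 2 * a ∈ Ioc 0 (2 * c) := ⟨by positivity, by linarith⟩
  have hθ' : -2 * Dw θ ∈ Ioc 0 (2 * c) := ⟨by linarith, hhi.trans hc⟩
  have hu := monotoneOn_sub_div_sq c h₀ hθ' hlo
  have hv := monotoneOn_sub_div (by linarith : 0 ≤ c) h₀.1 hθ'.1 hlo
  have hv₀ : 0 ≤ (2 * a - c) / (2 * a) := div_nonneg (by linarith) (by positivity)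
  exact mul_le_mul hu (pow_le_pow_left₀ hv₀ hv k) (pow_nonneg hv₀ k)
    ((div_nonneg (by linarith) (by positivity)).trans hu)
end
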